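/- Let p be an odd prime and let M be a symmetric n×n integer matrix with all diagonal entries even. Let M' be the (n+2)×(n+2) symmetric integer matrix obtained as the block sum of M and the hyperbolic block [[0,1],[1,0]]. Let d be the dimension over 𝔽_p of the kernel of M modulo p and μ = 1 plus the dimension over 𝔽₂ of the kernel of M modulo 2. Suppose T and T' are unimodular integer matrices such that modulo p, T·M·Tᵀ is the block sum of a square matrix N with p ∤ det N and a zero matrix, and T'·M'·T'ᵀ is the block sum of a square matrix N'' with p ∤ det N'' and a zero matrix. Then the dimension over 𝔽_p of the kernel of M' modulo p equals d, 1 plus the dimension over 𝔽₂ of the kernel of M' modulo 2 equals μ, and the Legendre symbols satisfy ( (−1)^{d + (n+μ−1)/2}·det N | p ) = ( (−1)^{d + (n+μ+1)/2}·det N'' | p ). -/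

import Mathlib

/-
Over `𝔽_q` the stabilization adds an invertible `2 × 2` block, so it raises the rank by two and
leaves the kernel dimension unchanged. Over `𝔽_p`, `M'` is congruent both to `N ⊕ H ⊕ 0`
(via `T ⊕ 1`, with `H = [[0,1],[1,0]]`) and to `N'' ⊕ 0` (via `T'`). Comparing upper left blocks
of the two congruences gives `N'' = C (N ⊕ H) Cᵀ` for a square matrix `C`, so
`det N'' = -c² det N` with `c ≠ 0`; the sign `-1 = det H` is absorbed by the exponent, which grows
by one.
-/

open Matrix

/-- The dimension over `𝔽_p` of the kernel of the reduction of an integer matrix modulo `p`. -/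
noncomputable def kerDimModP (p : ℕ) {n : ℕ} (M : Matrix (Fin n) (Fin n) ℤ) : ℕ :=
  Module.finrank (ZMod p)
    (LinearMap.ker (Matrix.mulVecLin (M.map (Int.cast : ℤ → ZMod p))))

/-- The upper left `r × r` submatrix of an `n × n` matrix, for `r ≤ n`. -/
def upperLeft {n : ℕ} (M : Matrix (Fin n) (Fin n) ℤ) (r : ℕ) (h : r ≤ n) :
    Matrix (Fin r) (Fin r) ℤ :=
  M.submatrix (Fin.castLE h) (Fin.castLE h)

/-- The `(n+2) × (n+2)` block sum of an `n × n` matrix `M` with the hyperbolic block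
`[[0,1],[1,0]]`. -/
def stabilize {n : ℕ} (M : Matrix (Fin n) (Fin n) ℤ) :
    Matrix (Fin (n + 2)) (Fin (n + 2)) ℤ :=
  Matrix.reindex finSumFinEquiv finSumFinEquiv
    (Matrix.fromBlocks M 0 0 !![0, 1; 1, 0])

open Module

namespace Matrix

theorem submatrix_mul_mul_transpose {R l m n o : Type*} [CommRing R] [Fintype n] [Fintype o]
    (X : Matrix m n R) (Y : Matrix n n R) (f : l → m) (g : o ≃ n) :
    (X * Y * Xᵀ).submatrix f f = X.submatrix f g * Y.submatrix g g * (X.submatrix f g)ᵀ := by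
  rw [transpose_submatrix, Matrix.mul_assoc, submatrix_mul_equiv, submatrix_mul_equiv,
    Matrix.mul_assoc]

theorem toBlocks₁₁_mul_fromBlocks_zero_mul_transpose {R α β α' β' : Type*} [CommRing R]
    [Fintype α] [Fintype β] (C : Matrix (α' ⊕ β') (α ⊕ β) R) (B : Matrix α α R) :
    (C * fromBlocks B 0 0 (0 : Matrix β β R) * Cᵀ).toBlocks₁₁ =
      C.toBlocks₁₁ * B * C.toBlocks₁₁ᵀ := by
  ext i j
  simp [toBlocks₁₁, mul_apply, Fintype.sum_sum_type]

theorem det_fromBlocks_hyperbolic {R α : Type*} [CommRing R] [Fintype α] [DecidableEq α]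
    (B : Matrix α α R) : (fromBlocks B 0 0 !![0, 1; 1, 0]).det = -B.det := by
  simp [det_fromBlocks_zero₂₁, det_fin_two_of]

variable {K : Type*} [Field K]

theorem finrank_ker_mulVecLin_fromBlocks {α β : Type*} [Fintype α] [Fintype β]
    (A : Matrix α α K) (D : Matrix β β K) :
    finrank K (fromBlocks A 0 0 D).mulVecLin.ker =
      finrank K A.mulVecLin.ker + finrank K D.mulVecLin.ker := by
  let e := LinearEquiv.sumArrowLequivProdArrow α β K K
  have hcomp : (fromBlocks A 0 0 D).mulVecLin =
      (e.symm.toLinearMap ∘ₗ A.mulVecLin.prodMap D.mulVecLin) ∘ₗ e.toLinearMap := by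
    ext x i
    cases i <;> simp [e, fromBlocks_mulVec, LinearEquiv.sumArrowLequivProdArrow,
      Equiv.sumArrowEquivProdArrow]
  let f : A.mulVecLin.ker.prod D.mulVecLin.ker ≃ₗ[K] A.mulVecLin.ker × D.mulVecLin.ker :=
    { toFun := fun x => (⟨x.1.1, x.2.1⟩, ⟨x.1.2, x.2.2⟩)
      invFun := fun y => ⟨(y.1.1, y.2.1), ⟨y.1.2, y.2.2⟩⟩
      left_inv := fun _ => rfl
      right_inv := fun _ => rfl
      map_add' := fun _ _ => rfl
      map_smul' := fun _ _ => rfl }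
  rw [hcomp, LinearMap.ker_comp, LinearMap.ker_comp, LinearEquiv.ker, Submodule.comap_bot,
    LinearMap.ker_prodMap, Submodule.comap_equiv_eq_map_symm, LinearEquiv.finrank_map_eq,
    f.finrank_eq, finrank_prod]

theorem rank_add_finrank_ker_mulVecLin {ι : Type*} [Fintype ι] (A : Matrix ι ι K) :
    A.rank + finrank K A.mulVecLin.ker = Fintype.card ι := by
  simpa [rank, finrank_pi] using A.mulVecLin.finrank_range_add_finrank_ker

theorem rank_fromBlocks_zero {α β : Type*} [Fintype α] [Fintype β]
    (A : Matrix α α K) (D : Matrix β β K) :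
    (fromBlocks A 0 0 D).rank = A.rank + D.rank := by
  have h := rank_add_finrank_ker_mulVecLin (fromBlocks A 0 0 D)
  have hA := rank_add_finrank_ker_mulVecLin A
  have hD := rank_add_finrank_ker_mulVecLin D
  rw [finrank_ker_mulVecLin_fromBlocks, Fintype.card_sum] at h
  omega

def CongrBlockZero {ι α : Type*} [Fintype ι] [DecidableEq ι] [Fintype α] (A : Matrix ι ι K)
    (B : Matrix α α K) : Prop :=
  ∃ (k : ℕ) (P : Matrix ι ι K) (e : ι ≃ α ⊕ Fin k),
    IsUnit P.det ∧ P * A * Pᵀ = (fromBlocks B 0 0 0).submatrix e e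

namespace CongrBlockZero

variable {ι α : Type*} [Fintype ι] [DecidableEq ι] [Fintype α] {A : Matrix ι ι K}
  {B : Matrix α α K}

theorem rank_eq [DecidableEq α] (h : CongrBlockZero A B) (hB : IsUnit B.det) :
    A.rank = Fintype.card α := by
  obtain ⟨k, P, e, hP, hPA⟩ := h
  have hPt : IsUnit Pᵀ.det := by rwa [det_transpose]
  rw [← rank_mul_eq_right_of_isUnit_det P A hP, ← rank_mul_eq_left_of_isUnit_det _ _ hPt, hPA,
    rank_submatrix, rank_fromBlocks_zero, rank_of_isUnit B ((isUnit_iff_isUnit_det B).2 hB),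
    rank_zero, add_zero]

theorem submatrix {κ : Type*} [Fintype κ] [DecidableEq κ] (h : CongrBlockZero A B) (f : κ ≃ ι) :
    CongrBlockZero (A.submatrix f f) B := by
  obtain ⟨k, P, e, hP, hPA⟩ := h
  refine ⟨k, P.submatrix f f, f.trans e, by rwa [det_submatrix_equiv_self], ?_⟩
  rw [← submatrix_mul_mul_transpose, hPA, submatrix_submatrix]
  rfl

theorem fromBlocks {β : Type*} [Fintype β] [DecidableEq β] (h : CongrBlockZero A B)
    (D : Matrix β β K) : CongrBlockZero (fromBlocks A 0 0 D) (fromBlocks B 0 0 D) := by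
  obtain ⟨k, P, e, hP, hPA⟩ := h
  refine ⟨k, Matrix.fromBlocks P 0 0 1,
    (e.sumCongr (Equiv.refl β)).trans ((Equiv.sumAssoc α (Fin k) β).trans
      ((Equiv.sumCongr (Equiv.refl α) (Equiv.sumComm (Fin k) β)).trans
        (Equiv.sumAssoc α β (Fin k)).symm)), by simpa [det_fromBlocks_zero₂₁] using hP, ?_⟩
  rw [fromBlocks_transpose, fromBlocks_multiply, fromBlocks_multiply]
  simp only [Matrix.mul_zero, Matrix.zero_mul, add_zero, zero_add, Matrix.one_mul,
    Matrix.mul_one, transpose_zero, transpose_one, hPA]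
  ext (x | x) (y | y)
  · obtain ⟨x, rfl⟩ := e.symm.surjective x
    obtain ⟨y, rfl⟩ := e.symm.surjective y
    rcases x with a | a <;> rcases y with b | b <;> simp
  · obtain ⟨x, rfl⟩ := e.symm.surjective x
    rcases x with a | a <;> simp
  · obtain ⟨y, rfl⟩ := e.symm.surjective y
    rcases y with b | b <;> simp
  · simp

theorem exists_det_eq_sq_mul [DecidableEq α] {α' : Type*} [Fintype α'] [DecidableEq α']
    {B' : Matrix α' α' K} (h : CongrBlockZero A B) (h' : CongrBlockZero A B')
    (hB : IsUnit B.det) (hB' : IsUnit B'.det) :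
    ∃ c : K, c ≠ 0 ∧ B'.det = c ^ 2 * B.det := by
  have g : α' ≃ α := Fintype.equivOfCardEq ((h'.rank_eq hB').symm.trans (h.rank_eq hB))
  obtain ⟨k, P, e, hP, hPA⟩ := h
  obtain ⟨k', Q, e', -, hQA⟩ := h'
  set C := (Q * P⁻¹).submatrix e'.symm e.symm
  have hA : A = P⁻¹ * (Matrix.fromBlocks B 0 0 0).submatrix e e * P⁻¹ᵀ := by
    rw [← hPA, ← Matrix.mul_assoc, ← Matrix.mul_assoc, nonsing_inv_mul _ hP, Matrix.one_mul,
      Matrix.mul_assoc, transpose_nonsing_inv, mul_nonsing_inv _ (by rwa [det_transpose]),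
      Matrix.mul_one]
  have hC : C * Matrix.fromBlocks B 0 0 (0 : Matrix (Fin k) (Fin k) K) * Cᵀ =
      Matrix.fromBlocks B' 0 0 0 := by
    have := congrArg (fun X => X.submatrix e'.symm e'.symm) hQA
    simp only [submatrix_submatrix, Equiv.self_comp_symm, submatrix_id_id] at this
    have hQ : Q * A * Qᵀ = Q * P⁻¹ * (Matrix.fromBlocks B 0 0 0).submatrix e e * (Q * P⁻¹)ᵀ := by
      rw [hA, transpose_mul]
      simp only [Matrix.mul_assoc]
    rw [← this, hQ, submatrix_mul_mul_transpose _ _ _ e.symm, submatrix_submatrix,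
      Equiv.self_comp_symm, submatrix_id_id]
  have hB'C : B' = C.toBlocks₁₁ * B * C.toBlocks₁₁ᵀ := by
    simpa using (congrArg toBlocks₁₁ hC).symm.trans
      (toBlocks₁₁_mul_fromBlocks_zero_mul_transpose C B)
  set c := (C.toBlocks₁₁.submatrix id g).det
  have hdet : B'.det = c ^ 2 * B.det := by
    rw [hB'C, ← submatrix_id_id (_ * _ * _), submatrix_mul_mul_transpose _ _ _ g, det_mul,
      det_mul, det_transpose, det_submatrix_equiv_self]
    ring
  refine ⟨c, fun hc => hB'.ne_zero ?_, hdet⟩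
  rw [hdet, hc]
  ring

end CongrBlockZero

end Matrix

theorem legendreSym_eq_of_intCast_eq_mul_sq (p : ℕ) [Fact p.Prime] {a b : ℤ} {c : ZMod p}
    (hc : c ≠ 0) (h : (b : ZMod p) = a * c ^ 2) : legendreSym p b = legendreSym p a := by
  rw [legendreSym, legendreSym, h, map_mul, quadraticChar_sq_one' hc, mul_one]

theorem stabilize_map {R : Type*} [CommRing R] {n : ℕ} (M : Matrix (Fin n) (Fin n) ℤ) :
    (stabilize M).map (Int.cast : ℤ → R) =
      (fromBlocks (M.map Int.cast) 0 0 !![0, 1; 1, 0]).submatrix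
        finSumFinEquiv.symm finSumFinEquiv.symm := by
  rw [stabilize, reindex_apply, ← submatrix_map, fromBlocks_map, Matrix.map_zero _ Int.cast_zero,
    Matrix.map_zero _ Int.cast_zero]
  congr
  ext i j
  fin_cases i <;> fin_cases j <;> simp

theorem kerDimModP_stabilize (q : ℕ) [Fact q.Prime] {n : ℕ} (M : Matrix (Fin n) (Fin n) ℤ) :
    kerDimModP q (stabilize M) = kerDimModP q M := by
  have hM := rank_add_finrank_ker_mulVecLin (M.map (Int.cast : ℤ → ZMod q))
  have hS := rank_add_finrank_ker_mulVecLin ((stabilize M).map (Int.cast : ℤ → ZMod q))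
  have hH : (!![0, 1; 1, 0] : Matrix (Fin 2) (Fin 2) (ZMod q)).rank = 2 := by
    rw [rank_of_isUnit _ ((isUnit_iff_isUnit_det _).2 (by simp [det_fin_two_of])),
      Fintype.card_fin]
  have hrank : ((stabilize M).map (Int.cast : ℤ → ZMod q)).rank =
      (M.map (Int.cast : ℤ → ZMod q)).rank + 2 := by
    rw [stabilize_map, rank_submatrix, rank_fromBlocks_zero, hH]
  simp only [Fintype.card_fin] at hM hS
  unfold kerDimModP
  omega

theorem map_intCast_eq_fromBlocks_zero_submatrix (q : ℕ) {n r : ℕ} (hr : r ≤ n)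
    (X : Matrix (Fin n) (Fin n) ℤ)
    (hout : ∀ i j : Fin n, (r ≤ (i : ℕ) ∨ r ≤ (j : ℕ)) → (q : ℤ) ∣ X i j) :
    X.map (Int.cast : ℤ → ZMod q) =
      (fromBlocks ((upperLeft X r hr).map Int.cast) 0 0 0).submatrix
        (finSumFinEquiv.trans (finCongr (Nat.add_sub_cancel' hr))).symm
        (finSumFinEquiv.trans (finCongr (Nat.add_sub_cancel' hr))).symm := by
  set e := (finSumFinEquiv.trans (finCongr (Nat.add_sub_cancel' hr))).symm
  have hzero (i j : Fin n) (h : r ≤ (i : ℕ) ∨ r ≤ (j : ℕ)) : ((X i j : ℤ) : ZMod q) = 0 :=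
    (ZMod.intCast_zmod_eq_zero_iff_dvd _ _).2 (hout i j h)
  ext i j
  obtain ⟨a, rfl⟩ := e.symm.surjective i
  obtain ⟨b, rfl⟩ := e.symm.surjective j
  rcases a with a | a <;> rcases b with b | b <;>
    simp only [submatrix_apply, map_apply, Equiv.apply_symm_apply, fromBlocks_apply₁₁,
      fromBlocks_apply₁₂, fromBlocks_apply₂₁, fromBlocks_apply₂₂, Matrix.zero_apply]
  · rfl
  all_goals exact hzero _ _ (by simp [e])

theorem congrBlockZero_of_unimodular (q : ℕ) [Fact q.Prime] {n r : ℕ} (hr : r ≤ n)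
    {M T : Matrix (Fin n) (Fin n) ℤ} (hT : T.det = 1 ∨ T.det = -1)
    (hout : ∀ i j : Fin n, (r ≤ (i : ℕ) ∨ r ≤ (j : ℕ)) → (q : ℤ) ∣ (T * M * Tᵀ) i j) :
    CongrBlockZero (M.map (Int.cast : ℤ → ZMod q))
      ((upperLeft (T * M * Tᵀ) r hr).map Int.cast) := by
  refine ⟨n - r, T.map Int.cast,
    (finSumFinEquiv.trans (finCongr (Nat.add_sub_cancel' hr))).symm, ?_, ?_⟩
  · rw [← Int.cast_det]
    rcases hT with h | h <;> simp [h]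
  · have hmap : (T * M * Tᵀ).map (Int.cast : ℤ → ZMod q) =
        T.map Int.cast * M.map Int.cast * (T.map Int.cast)ᵀ := by
      rw [← transpose_map]
      exact (Matrix.map_mul (f := Int.castRingHom (ZMod q))).trans
        (congrArg (· * _) (Matrix.map_mul (f := Int.castRingHom (ZMod q))))
    rw [← hmap]
    exact map_intCast_eq_fromBlocks_zero_submatrix q hr _ hout

theorem isUnit_det_map_intCast {q : ℕ} [Fact q.Prime] {n : ℕ} {X : Matrix (Fin n) (Fin n) ℤ}
    (h : ¬ (q : ℤ) ∣ X.det) : IsUnit (X.map (Int.cast : ℤ → ZMod q)).det := by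
  rwa [← Int.cast_det, isUnit_iff_ne_zero, Ne, ZMod.intCast_zmod_eq_zero_iff_dvd]

theorem stmt_14_general (p n : ℕ) [Fact p.Prime]
    (M : Matrix (Fin n) (Fin n) ℤ)
    (d μ : ℕ) (hd : d = kerDimModP p M) (hμ : μ = 1 + kerDimModP 2 M)
    (T : Matrix (Fin n) (Fin n) ℤ) (hT : T.det = 1 ∨ T.det = -1)
    (r : ℕ) (hr : r ≤ n)
    (hN : ¬ (p : ℤ) ∣ (upperLeft (T * M * Tᵀ) r hr).det)
    (hout : ∀ i j : Fin n, (r ≤ (i : ℕ) ∨ r ≤ (j : ℕ)) → (p : ℤ) ∣ (T * M * Tᵀ) i j)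
    (T' : Matrix (Fin (n + 2)) (Fin (n + 2)) ℤ) (hT' : T'.det = 1 ∨ T'.det = -1)
    (r' : ℕ) (hr' : r' ≤ n + 2)
    (hN'' : ¬ (p : ℤ) ∣ (upperLeft (T' * stabilize M * T'ᵀ) r' hr').det)
    (hout' : ∀ i j : Fin (n + 2), (r' ≤ (i : ℕ) ∨ r' ≤ (j : ℕ)) →
      (p : ℤ) ∣ (T' * stabilize M * T'ᵀ) i j) :
    kerDimModP p (stabilize M) = d ∧
    1 + kerDimModP 2 (stabilize M) = μ ∧
    legendreSym p ((-1) ^ (d + (n + μ - 1) / 2) * (upperLeft (T * M * Tᵀ) r hr).det) =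
      legendreSym p ((-1) ^ (d + (n + μ + 1) / 2) *
        (upperLeft (T' * stabilize M * T'ᵀ) r' hr').det) := by
  have : Fact (Nat.Prime 2) := ⟨Nat.prime_two⟩
  refine ⟨(kerDimModP_stabilize p M).trans hd.symm, by rw [kerDimModP_stabilize, hμ], ?_⟩
  set N := upperLeft (T * M * Tᵀ) r hr
  have hS : CongrBlockZero ((stabilize M).map (Int.cast : ℤ → ZMod p))
      (fromBlocks (N.map Int.cast) 0 0 !![0, 1; 1, 0]) := by
    rw [stabilize_map]
    exact ((congrBlockZero_of_unimodular p hr hT hout).fromBlocks _).submatrix _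
  obtain ⟨c, hc, hdet⟩ := hS.exists_det_eq_sq_mul (congrBlockZero_of_unimodular p hr' hT' hout')
    (by rw [det_fromBlocks_hyperbolic]; exact (isUnit_det_map_intCast hN).neg)
    (isUnit_det_map_intCast hN'')
  rw [show d + (n + μ + 1) / 2 = d + (n + μ - 1) / 2 + 1 by omega]
  refine (legendreSym_eq_of_intCast_eq_mul_sq p hc ?_).symm
  rw [det_fromBlocks_hyperbolic, ← Int.cast_det, ← Int.cast_det] at hdet
  rw [Int.cast_mul, hdet]
  push_cast
  ring

/-- Invariance of the singular determinant under the stabilization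
`M ↦ M ⊕ [[0,1],[1,0]]`: with `d`, `μ` the mod-`p` kernel dimension and `1 +` the mod-`2`
kernel dimension of `M`, and `T`, `T'` unimodular matrices bringing `M` and its stabilization
`M'` into block form modulo the odd prime `p`, the corresponding quantities for `M'` are `d`
and `μ`, and `((-1)^(d + (n+μ-1)/2) · det N | p) = ((-1)^(d + (n+μ+1)/2) · det N'' | p)`. -/
theorem stmt_14 (p n : ℕ) [Fact p.Prime] (hp2 : p ≠ 2)
    (M : Matrix (Fin n) (Fin n) ℤ) (hsymm : M.IsSymm) (hdiag : ∀ i, Even (M i i))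
    (d μ : ℕ) (hd : d = kerDimModP p M) (hμ : μ = 1 + kerDimModP 2 M)
    (T : Matrix (Fin n) (Fin n) ℤ) (hT : T.det = 1 ∨ T.det = -1)
    (r : ℕ) (hr : r ≤ n)
    (hN : ¬ (p : ℤ) ∣ (upperLeft (T * M * Tᵀ) r hr).det)
    (hout : ∀ i j : Fin n, (r ≤ (i : ℕ) ∨ r ≤ (j : ℕ)) → (p : ℤ) ∣ (T * M * Tᵀ) i j)
    (T' : Matrix (Fin (n + 2)) (Fin (n + 2)) ℤ) (hT' : T'.det = 1 ∨ T'.det = -1)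
    (r' : ℕ) (hr' : r' ≤ n + 2)
    (hN'' : ¬ (p : ℤ) ∣ (upperLeft (T' * stabilize M * T'ᵀ) r' hr').det)
    (hout' : ∀ i j : Fin (n + 2), (r' ≤ (i : ℕ) ∨ r' ≤ (j : ℕ)) →
      (p : ℤ) ∣ (T' * stabilize M * T'ᵀ) i j) :
    kerDimModP p (stabilize M) = d ∧
    1 + kerDimModP 2 (stabilize M) = μ ∧
    legendreSym p ((-1) ^ (d + (n + μ - 1) / 2) * (upperLeft (T * M * Tᵀ) r hr).det) =
      legendreSym p ((-1) ^ (d + (n + μ + 1) / 2) *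
        (upperLeft (T' * stabilize M * T'ᵀ) r' hr').det) :=
  stmt_14_general p n M d μ hd hμ T hT r hr hN hout T' hT' r' hr' hN'' hout'
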